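/- arXiv:1502.01293 — 3 statements merged into one kernel-verified Lean document; each statement's English description precedes it below -/
import Mathlib

section
/- Let α ≥ β ≥ -1/2 be real with α > -1/2 and ρ = α + β + 1. There exist constants 0 < c ≤ C such that for every real λ with |λ| ≥ 1, c·|λ|^(-2) ≤ |c_{α,β}(λ)|^(-2)·|c_{α+1,β+1}(λ)|^(2) ≤ C·|λ|^(-2); that is, the quotient of the Plancherel densities |c_{α,β}(λ)|^(-2) and |c_{α+1,β+1}(λ)|^(-2) decays like |λ|^(-2) as |λ| → ∞ along the real axis. -/
open Complex

/-!
By `Γ(s + 1) = s Γ(s)`, shifting `(α, β)` to `(α + 1, β + 1)` multiplies the c-function by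
`8(α + 1) / (ρ + iλ)`. So the density quotient is exactly `64(α + 1)² / (ρ² + λ²)`,
which is comparable to `λ⁻²` once `|λ| ≥ 1`.
-/

/-- The Harish-Chandra c-function of Cherednik–Opdam analysis on the real line,
`c_{α,β}(λ) = Γ(α+1)·2^(ρ−iλ)·Γ(iλ) / (Γ((ρ+iλ)/2)·Γ((α−β+1+iλ)/2))`
with `ρ = α+β+1`. -/
noncomputable def cherednikC (α β : ℝ) (lam : ℂ) : ℂ :=
  Complex.Gamma ((α : ℂ) + 1) * (2 : ℂ) ^ (((α : ℂ) + (β : ℂ) + 1) - Complex.I * lam) *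
      Complex.Gamma (Complex.I * lam) /
    (Complex.Gamma ((((α : ℂ) + (β : ℂ) + 1) + Complex.I * lam) / 2) *
      Complex.Gamma ((((α : ℂ) - (β : ℂ) + 1) + Complex.I * lam) / 2))

lemma div_add_le_mul_inv {a r x : ℝ} (ha : 0 ≤ a) (hr : 0 ≤ r) (hx : 0 < x) :
    a / (r + x) ≤ a * x⁻¹ :=
  div_le_div_of_nonneg_left ha hx (by linarith)

lemma div_one_add_mul_inv_le_div_add {a r x : ℝ} (ha : 0 ≤ a) (hr : 0 ≤ r) (hx : 1 ≤ x) :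
    a / (1 + r) * x⁻¹ ≤ a / (r + x) := by
  rw [← div_eq_mul_inv, div_div]
  exact div_le_div_of_nonneg_left ha (by positivity) (by nlinarith)

lemma Complex.Gamma_ne_zero_of_im_ne_zero {z : ℂ} (hz : z.im ≠ 0) : Gamma z ≠ 0 :=
  Gamma_ne_zero fun n h => hz (by simp [h])

lemma Complex.Gamma_add_I_mul_div_two_ne_zero (x : ℂ) (hx : x.im = 0) {lam : ℝ}
    (hlam : lam ≠ 0) : Gamma ((x + I * lam) / 2) ≠ 0 :=
  Gamma_ne_zero_of_im_ne_zero (by simpa [hx] using hlam)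

namespace cherednikC

variable {α β lam : ℝ}

lemma ne_zero (hα : -1 < α) (hlam : lam ≠ 0) : cherednikC α β lam ≠ 0 := by
  have hΓα : Gamma ((α : ℂ) + 1) ≠ 0 := Gamma_ne_zero_of_re_pos (by simp; linarith)
  have hΓlam : Gamma (I * lam) ≠ 0 := Gamma_ne_zero_of_im_ne_zero (by simpa using hlam)
  have h2 : (2 : ℂ) ^ ((α : ℂ) + β + 1 - I * lam) ≠ 0 := by simp
  unfold cherednikC
  exact div_ne_zero (mul_ne_zero (mul_ne_zero hΓα h2) hΓlam)
    (mul_ne_zero (Gamma_add_I_mul_div_two_ne_zero _ (by simp) hlam)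
      (Gamma_add_I_mul_div_two_ne_zero _ (by simp) hlam))

lemma shift (hα : α + 1 ≠ 0) (hlam : lam ≠ 0) :
    cherednikC (α + 1) (β + 1) lam =
      8 * (α + 1) / ((α + β + 1 : ℝ) + I * lam) * cherednikC α β lam := by
  have hα' : (α : ℂ) + 1 ≠ 0 := by exact_mod_cast hα
  have hρ : ((α : ℂ) + β + 1 + I * lam) / 2 ≠ 0 := by
    intro h; exact hlam (by simpa using congr_arg im h)
  have hΓα : Gamma ((α + 1 : ℝ) + 1 : ℂ) = (α + 1) * Gamma (α + 1) := by
    rw [← Gamma_add_one _ hα']; push_cast; ring_nf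
  have hΓρ : Gamma (((α + 1 : ℝ) + (β + 1 : ℝ) + 1 + I * lam) / 2 : ℂ) =
      ((α + β + 1 + I * lam) / 2) * Gamma ((α + β + 1 + I * lam) / 2) := by
    rw [← Gamma_add_one _ hρ]; push_cast; ring_nf
  have hpow : (2 : ℂ) ^ ((α + 1 : ℝ) + (β + 1 : ℝ) + 1 - I * lam : ℂ) =
      4 * 2 ^ ((α : ℂ) + β + 1 - I * lam) := by
    rw [show ((α + 1 : ℝ) + (β + 1 : ℝ) + 1 - I * lam : ℂ) =
      2 + ((α : ℂ) + β + 1 - I * lam) by push_cast; ring, cpow_add _ _ two_ne_zero]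
    norm_num
  have hαβ : (((α + 1 : ℝ) : ℂ) - (β + 1 : ℝ) + 1 + I * lam) / 2 =
      ((α : ℂ) - β + 1 + I * lam) / 2 := by
    push_cast; ring
  have hΓρ' := Gamma_add_I_mul_div_two_ne_zero ((α : ℂ) + β + 1) (by simp) hlam
  have hΓαβ := Gamma_add_I_mul_div_two_ne_zero ((α : ℂ) - β + 1) (by simp) hlam
  unfold cherednikC
  rw [hΓα, hΓρ, hpow, hαβ]
  push_cast
  field_simp
  ring

lemma sq_norm_shift_factor (α ρ lam : ℝ) :
    ‖8 * (α + 1) / ((ρ : ℂ) + I * lam)‖ ^ 2 = 64 * (α + 1) ^ 2 / (ρ ^ 2 + lam ^ 2) := by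
  rw [Complex.sq_norm, map_div₀, mul_comm I, normSq_add_mul_I]
  norm_cast
  rw [normSq_ofReal]
  ring

lemma norm_rpow_neg_two_mul_norm_shift_rpow_two (hα : -1 < α) (hlam : lam ≠ 0) :
    ‖cherednikC α β lam‖ ^ (-2 : ℝ) * ‖cherednikC (α + 1) (β + 1) lam‖ ^ (2 : ℝ) =
      64 * (α + 1) ^ 2 / ((α + β + 1) ^ 2 + lam ^ 2) := by
  have hc : ‖cherednikC α β lam‖ ≠ 0 := norm_ne_zero_iff.mpr (ne_zero hα hlam)
  rw [Real.rpow_neg (norm_nonneg _), Real.rpow_two, Real.rpow_two, shift (by linarith) hlam,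
    norm_mul, mul_pow, sq_norm_shift_factor]
  field_simp

end cherednikC

theorem cherednik_plancherelDensity_quotient_decay_general
    (α β : ℝ) (hα : -(1/2 : ℝ) < α) :
    ∃ c C : ℝ, 0 < c ∧ c ≤ C ∧ ∀ lam : ℝ, 1 ≤ |lam| →
      c * |lam| ^ (-2 : ℝ) ≤
        (‖cherednikC α β (lam : ℂ)‖) ^ (-2 : ℝ) *
          (‖cherednikC (α + 1) (β + 1) (lam : ℂ)‖) ^ (2 : ℝ) ∧
      (‖cherednikC α β (lam : ℂ)‖) ^ (-2 : ℝ) *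
          (‖cherednikC (α + 1) (β + 1) (lam : ℂ)‖) ^ (2 : ℝ) ≤
        C * |lam| ^ (-2 : ℝ) := by
  have hα1 : 0 < α + 1 := by linarith
  refine ⟨64 * (α + 1) ^ 2 / (1 + (α + β + 1) ^ 2), 64 * (α + 1) ^ 2, by positivity,
    div_le_self (by positivity) (by nlinarith [sq_nonneg (α + β + 1)]), fun lam hlam => ?_⟩
  have hlam0 : lam ≠ 0 := by rintro rfl; norm_num at hlam
  have hlam2 : 1 ≤ lam ^ 2 := by nlinarith [sq_abs lam, abs_nonneg lam]
  rw [cherednikC.norm_rpow_neg_two_mul_norm_shift_rpow_two (by linarith) hlam0,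
    Real.rpow_neg (abs_nonneg _), Real.rpow_two, sq_abs]
  exact ⟨div_one_add_mul_inv_le_div_add (by positivity) (sq_nonneg _) hlam2,
    div_add_le_mul_inv (by positivity) (sq_nonneg _) (by linarith)⟩

/-- The quotient `|c_{α,β}(λ)|⁻² / |c_{α+1,β+1}(λ)|⁻²` of the Plancherel densities
decays like `|λ|⁻²` for `|λ| ≥ 1` on the real axis. -/
theorem cherednik_plancherelDensity_quotient_decay
    (α β : ℝ) (hβ : -(1/2 : ℝ) ≤ β) (hβα : β ≤ α) (hα : -(1/2 : ℝ) < α)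
    (ρ : ℝ) (hρ : ρ = α + β + 1) :
    ∃ c C : ℝ, 0 < c ∧ c ≤ C ∧ ∀ lam : ℝ, 1 ≤ |lam| →
      c * |lam| ^ (-2 : ℝ) ≤
        (‖cherednikC α β (lam : ℂ)‖) ^ (-2 : ℝ) *
          (‖cherednikC (α + 1) (β + 1) (lam : ℂ)‖) ^ (2 : ℝ) ∧
      (‖cherednikC α β (lam : ℂ)‖) ^ (-2 : ℝ) *
          (‖cherednikC (α + 1) (β + 1) (lam : ℂ)‖) ^ (2 : ℝ) ≤
        C * |lam| ^ (-2 : ℝ) :=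
  cherednik_plancherelDensity_quotient_decay_general α β hα
end

section
/- Let α ≥ β ≥ -1/2 be real with α > -1/2 and ρ = α + β + 1. The function λ ↦ |1 − ρ/(iλ)| · |c_{α,β}(λ)|^(-2) on ℝ \ {0} (extended by 0 at λ = 0) is Lebesgue-integrable on the interval [-1, 1]; in other words, the non-symmetric Plancherel density λ ↦ (1 − ρ/(iλ)) / (8π·|c_{α,β}(λ)|²) is locally integrable near 0. -/
open Complex MeasureTheory

/-!
Since `Γ(iλ) = Γ(iλ + 1) / (iλ)`, the factor `|iλ|²` in `|c_{α,β}(λ)|⁻²` cancels the pole of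
`|1 - ρ/(iλ)|` at `λ = 0`. What remains is the norm of a function that is continuous on all of `ℝ`,
because the remaining Gamma factors are evaluated at points of positive real part; it is
therefore integrable on `[-1, 1]`.
-/

theorem Complex.continuous_Gamma_comp {X : Type*} [TopologicalSpace X] {f : X → ℂ}
    (hf : Continuous f) (hre : ∀ x, 0 < (f x).re) : Continuous fun x => Gamma (f x) := by
  refine continuous_iff_continuousAt.2 fun x => ?_
  refine (continuousAt_Gamma _ fun m hm => (hre x).not_ge ?_).comp hf.continuousAt
  simp [hm]

theorem norm_rpow_neg_two {K : Type*} [NormedDivisionRing K] (c : K) :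
    ‖c‖ ^ (-2 : ℝ) = ‖(c ^ 2)⁻¹‖ := by
  rw [norm_inv, norm_pow, show (-2 : ℝ) = ((-2 : ℤ) : ℝ) by norm_num, Real.rpow_intCast]
  rfl

theorem one_sub_div_mul_inv_sq_div_mul {K : Type*} [Field K] {r s N D : K} (hs : s ≠ 0) :
    (1 - r / s) * ((N / (s * D)) ^ 2)⁻¹ = (s - r) * s * (D / N) ^ 2 := by
  rw [← inv_pow, inv_div]
  field_simp

namespace Cherednik

variable (α β : ℝ)

noncomputable def num (z : ℂ) : ℂ :=
  Gamma ((α : ℂ) + 1) * (2 : ℂ) ^ (((α : ℂ) + (β : ℂ) + 1) - I * z) * Gamma (I * z + 1)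

noncomputable def den (z : ℂ) : ℂ :=
  Gamma ((((α : ℂ) + (β : ℂ) + 1) + I * z) / 2) * Gamma ((((α : ℂ) - (β : ℂ) + 1) + I * z) / 2)

theorem cherednikC_eq_num_div {z : ℂ} (hz : z ≠ 0) :
    cherednikC α β z = num α β z / (I * z * den α β z) := by
  have hIz : I * z ≠ 0 := mul_ne_zero I_ne_zero hz
  rw [cherednikC, num, den, Gamma_add_one _ hIz]
  field_simp

theorem num_ne_zero (hα : 0 < α + 1) (lam : ℝ) : num α β lam ≠ 0 := by
  refine mul_ne_zero (mul_ne_zero ?_ ?_) ?_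
  · exact Gamma_ne_zero_of_re_pos (by simpa using hα)
  · exact cpow_ne_zero_iff.2 (.inl two_ne_zero)
  · exact Gamma_ne_zero_of_re_pos (by simp)

theorem continuous_num : Continuous fun lam : ℝ => num α β lam := by
  have hIlam : Continuous fun lam : ℝ => I * (lam : ℂ) := by fun_prop
  refine (continuous_const.mul ((continuous_const.sub hIlam).const_cpow (.inl two_ne_zero))).mul
    (continuous_Gamma_comp (hIlam.add continuous_const) fun lam => by simp)

theorem continuous_den (hρ : 0 < α + β + 1) (hαβ : 0 < α - β + 1) :
    Continuous fun lam : ℝ => den α β lam :=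
  (continuous_Gamma_comp (by fun_prop) fun lam => by simpa using hρ).mul
    (continuous_Gamma_comp (by fun_prop) fun lam => by simpa using hαβ)

noncomputable def densityExtension (lam : ℝ) : ℂ :=
  (I * lam - ((α + β + 1 : ℝ) : ℂ)) * (I * lam) * (den α β lam / num α β lam) ^ 2

theorem continuous_densityExtension (hα : 0 < α + 1) (hρ : 0 < α + β + 1) (hαβ : 0 < α - β + 1) :
    Continuous (densityExtension α β) :=
  (by fun_prop : Continuous fun lam : ℝ => (I * lam - ((α + β + 1 : ℝ) : ℂ)) * (I * lam)).mul
    (((continuous_den α β hρ hαβ).div (continuous_num α β) (num_ne_zero α β hα)).pow 2)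

theorem norm_mul_norm_cherednikC_rpow_neg_two {lam : ℝ} (hlam : lam ≠ 0) :
    ‖1 - ((α + β + 1 : ℝ) : ℂ) / (I * lam)‖ * ‖cherednikC α β lam‖ ^ (-2 : ℝ) =
      ‖densityExtension α β lam‖ := by
  rw [norm_rpow_neg_two, ← norm_mul, cherednikC_eq_num_div α β (ofReal_ne_zero.2 hlam),
    one_sub_div_mul_inv_sq_div_mul (mul_ne_zero I_ne_zero (ofReal_ne_zero.2 hlam)),
    densityExtension]

end Cherednik

/-- The non-symmetric Plancherel density `λ ↦ |1 − ρ/(iλ)|·|c_{α,β}(λ)|⁻²`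
(extended by `0` at `λ = 0`) is Lebesgue-integrable on `[-1, 1]`. -/
theorem cherednik_nonsymmetric_plancherelDensity_locally_integrable
    (α β : ℝ) (hβ : -(1/2 : ℝ) ≤ β) (hβα : β ≤ α) (hα : -(1/2 : ℝ) < α)
    (ρ : ℝ) (hρ : ρ = α + β + 1) :
    IntegrableOn
      (fun lam : ℝ => if lam = 0 then 0 else
        ‖1 - (ρ : ℂ) / (Complex.I * (lam : ℂ))‖ *
          ‖cherednikC α β (lam : ℂ)‖ ^ (-2 : ℝ))
      (Set.Icc (-1 : ℝ) 1) volume := by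
  subst hρ
  have hcont := (Cherednik.continuous_densityExtension α β (by linarith) (by linarith)
    (by linarith)).norm
  refine hcont.integrableOn_Icc.congr_fun_ae ?_
  filter_upwards [ae_restrict_of_ae (Measure.ae_ne volume 0)] with lam hlam
  rw [if_neg hlam, Cherednik.norm_mul_norm_cherednikC_rpow_neg_two α β hlam]
end

section
/- Let α ≥ β ≥ -1/2 be real with α > -1/2, ρ = α + β + 1, and let ν be the Plancherel measure on ℝ. Let g : ℝ → ℂ be a measurable function such that for every n ∈ ℕ (including n = 0) the function λ ↦ |λ|^(2n)·g(λ) belongs to L²(ℝ, ν). Let R_g ∈ [0, ∞] denote the supremum of |λ| over the ν-essential support of g, i.e. over the smallest closed subset of ℝ on whose complement g vanishes ν-almost everywhere. Then the sequence n ↦ (∫_ℝ |λ|^(4n)·|g(λ)|² dν(λ))^(1/(4n)) converges in [0, ∞] to R_g as n → ∞. -/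
open Complex MeasureTheory Filter

/-- The density of the Plancherel measure of the Cherednik–Opdam transform:
`λ ↦ |1 − ρ/(iλ)| / (8π·|c_{α,β}(λ)|²)` for `λ ≠ 0`, and `0` at `λ = 0`,
where `ρ = α+β+1`. -/
noncomputable def plancherelDensity (α β : ℝ) (lam : ℝ) : ℝ :=
  if lam = 0 then 0 else
    ‖1 - ((α + β + 1 : ℝ) : ℂ) / (Complex.I * (lam : ℂ))‖ /
      (8 * Real.pi * (‖cherednikC α β (lam : ℂ)‖) ^ 2)

/-- The Plancherel measure `ν` of the Cherednik–Opdam transform on `ℝ`. -/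
noncomputable def plancherelMeasure (α β : ℝ) : Measure ℝ :=
  volume.withDensity (fun lam => ENNReal.ofReal (plancherelDensity α β lam))

/-- The `ν`-essential support of `g`: the intersection of all closed sets outside of
which `g` vanishes `ν`-almost everywhere. -/
def essSupport (ν : Measure ℝ) (g : ℝ → ℂ) : Set ℝ :=
  ⋂₀ {F : Set ℝ | IsClosed F ∧ ∀ᵐ lam ∂ν, lam ∉ F → g lam = 0}

/-! With `μ = |g|² ν`, the moments in question are `∫ |λ|^(4n) dμ`, and `μ` is finite because
`g ∈ L²(ν)`. For a finite measure, `(∫ f^k dμ)^(1/k)` tends to the essential supremum of `f`: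
from above since `f ≤ ess sup f` a.e., from below by Chebyshev's inequality on `{c < f}`. The
essential supremum of the lower semicontinuous `|λ|` is its supremum over the support of `μ`,
and that support is the `ν`-essential support of `g`. -/

open scoped ENNReal NNReal Topology

lemma ENNReal.tendsto_mul_rpow_inv_natCast (c : ℝ≥0∞) {t : ℝ≥0∞} (h0 : t ≠ 0) (htop : t ≠ ∞) :
    Tendsto (fun k : ℕ => c * t ^ (k⁻¹ : ℝ)) atTop (𝓝 c) := by
  lift t to ℝ≥0 using htop
  have h0' : t ≠ 0 := by exact_mod_cast h0
  have hlim : Tendsto (fun k : ℕ => t ^ (k⁻¹ : ℝ)) atTop (𝓝 (t ^ (0 : ℝ))) :=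
    tendsto_const_nhds.nnrpow tendsto_inv_atTop_nhds_zero_nat (Or.inl h0')
  rw [NNReal.rpow_zero] at hlim
  simpa only [ENNReal.coe_rpow_of_ne_zero h0', ENNReal.coe_one, mul_one] using
    ENNReal.Tendsto.const_mul (ENNReal.tendsto_coe.2 hlim) (a := c) (Or.inl one_ne_zero)

namespace MeasureTheory

section LpToLinfty

variable {α : Type*} [MeasurableSpace α] {μ : Measure α} {f : α → ℝ≥0∞}

lemma lintegral_pow_rpow_inv_le {k : ℕ} (hk : k ≠ 0) :
    (∫⁻ x, f x ^ k ∂μ) ^ (k⁻¹ : ℝ) ≤ essSup f μ * μ Set.univ ^ (k⁻¹ : ℝ) :=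
  calc (∫⁻ x, f x ^ k ∂μ) ^ (k⁻¹ : ℝ)
      ≤ (∫⁻ _, essSup f μ ^ k ∂μ) ^ (k⁻¹ : ℝ) := by
        gcongr ?_ ^ _
        exact lintegral_mono_ae ((ENNReal.ae_le_essSup f).mono fun x hx => by gcongr)
    _ = essSup f μ * μ Set.univ ^ (k⁻¹ : ℝ) := by
        rw [lintegral_const, ENNReal.mul_rpow_of_nonneg _ _ (by positivity),
          ENNReal.pow_rpow_inv_natCast hk]

lemma mul_measure_lt_rpow_inv_le_lintegral_pow (hf : AEMeasurable f μ) {k : ℕ} (hk : k ≠ 0)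
    (c : ℝ≥0∞) : c * μ {x | c < f x} ^ (k⁻¹ : ℝ) ≤ (∫⁻ x, f x ^ k ∂μ) ^ (k⁻¹ : ℝ) :=
  calc c * μ {x | c < f x} ^ (k⁻¹ : ℝ)
      = (c ^ k * μ {x | c < f x}) ^ (k⁻¹ : ℝ) := by
        rw [ENNReal.mul_rpow_of_nonneg _ _ (by positivity), ENNReal.pow_rpow_inv_natCast hk]
    _ ≤ (c ^ k * μ {x | c ^ k ≤ f x ^ k}) ^ (k⁻¹ : ℝ) := by
        gcongr (c ^ k * μ ?_) ^ _
        exact fun x (hx : c < f x) => show c ^ k ≤ f x ^ k by gcongr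
    _ ≤ (∫⁻ x, f x ^ k ∂μ) ^ (k⁻¹ : ℝ) := by
        gcongr
        exact mul_meas_ge_le_lintegral₀ (hf.pow_const k) _

theorem tendsto_lintegral_pow_rpow_inv_essSup [IsFiniteMeasure μ] (hf : AEMeasurable f μ) :
    Tendsto (fun k : ℕ => (∫⁻ x, f x ^ k ∂μ) ^ (k⁻¹ : ℝ)) atTop (𝓝 (essSup f μ)) := by
  rcases eq_zero_or_neZero μ with rfl | hμ
  · simp only [lintegral_zero_measure, essSup_measure_zero, bot_eq_zero']
    exact tendsto_const_nhds.congr' ((eventually_ne_atTop 0).mono fun k hk =>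
      (ENNReal.zero_rpow_of_pos (by positivity)).symm)
  refine tendsto_of_le_liminf_of_limsup_le ?_ ?_
  · refine le_of_forall_lt_imp_le_of_dense fun c hc => ?_
    have hpos : μ {x | c < f x} ≠ 0 :=
      frequently_ae_iff.1 (frequently_lt_of_lt_limsup (by isBoundedDefault) hc)
    exact ((ENNReal.tendsto_mul_rpow_inv_natCast c hpos (measure_ne_top μ _)).liminf_eq).ge.trans
      (liminf_le_liminf ((eventually_ne_atTop 0).mono fun k hk =>
        mul_measure_lt_rpow_inv_le_lintegral_pow hf hk c))
  · exact (limsup_le_limsup ((eventually_ne_atTop 0).mono fun k hk =>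
      lintegral_pow_rpow_inv_le hk)).trans (ENNReal.tendsto_mul_rpow_inv_natCast (essSup f μ)
        (NeZero.ne (μ Set.univ)) (measure_ne_top μ _)).limsup_eq.le

end LpToLinfty

lemma essSup_eq_iSup_mem_support {X β : Type*} [TopologicalSpace X] [MeasurableSpace X]
    [HereditarilyLindelofSpace X] [CompleteLinearOrder β] [TopologicalSpace β] [OrderTopology β]
    [FirstCountableTopology β] {μ : Measure X} {h : X → β} (hh : LowerSemicontinuous h) :
    essSup h μ = ⨆ x ∈ μ.support, h x := by
  refine le_antisymm (essSup_le_of_ae_le _ ?_) (iSup₂_le fun x hx => le_of_not_gt fun hlt => ?_)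
  · exact Filter.Eventually.mono Measure.support_mem_ae fun x hx =>
      le_iSup₂ (f := fun x _ => h x) x hx
  · exact ((Measure.mem_support_iff_forall x).1 hx _ (hh x _ hlt)).ne' meas_essSup_lt

end MeasureTheory

lemma essSupport_eq_support_withDensity {ν : Measure ℝ} {g : ℝ → ℂ} {w : ℝ → ℝ≥0∞}
    (hw : AEMeasurable w ν) (hwg : ∀ x, w x = 0 ↔ g x = 0) :
    essSupport ν g = (ν.withDensity w).support := by
  rw [Measure.support_eq_sInter, essSupport]
  congr! 4 with F
  rw [← compl_mem_ae_iff, compl_compl]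
  refine Iff.trans ?_ (ae_withDensity_iff' hw).symm
  refine Filter.eventually_congr (.of_forall fun x => ?_)
  rw [Ne, hwg]
  tauto

theorem cherednik_support_radius_general
    (α β : ℝ)
    (g : ℝ → ℂ) (hg : Measurable g)
    (hL2 : ∀ n : ℕ, MemLp (fun lam : ℝ => (|lam| ^ (2 * n) : ℝ) • g lam) 2
      (plancherelMeasure α β)) :
    Tendsto
      (fun n : ℕ =>
        (∫⁻ lam, ENNReal.ofReal (|lam| ^ (4 * n) * (‖g lam‖) ^ 2)
            ∂(plancherelMeasure α β)) ^ ((1 : ℝ) / (4 * n)))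
      atTop
      (nhds (⨆ lam ∈ essSupport (plancherelMeasure α β) g, ENNReal.ofReal |lam|)) := by
  set ν := plancherelMeasure α β
  have hw : Measurable fun lam => ‖g lam‖ₑ ^ 2 := hg.enorm.pow_const 2
  set μ := ν.withDensity fun lam => ‖g lam‖ₑ ^ 2
  have hgL2 : MemLp g 2 ν := by simpa using hL2 0
  have : IsFiniteMeasure μ := isFiniteMeasure_withDensity <| by
    simpa using (lintegral_rpow_enorm_lt_top_of_eLpNorm_lt_top two_ne_zero ENNReal.ofNat_ne_top
      hgL2.eLpNorm_lt_top).ne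
  have hmoment (n : ℕ) : ∫⁻ lam, ENNReal.ofReal (|lam| ^ (4 * n) * ‖g lam‖ ^ 2) ∂ν =
      ∫⁻ lam, ENNReal.ofReal |lam| ^ (4 * n) ∂μ := by
    rw [lintegral_withDensity_eq_lintegral_mul _ hw (by fun_prop)]
    congr with lam
    rw [ENNReal.ofReal_mul (by positivity), ENNReal.ofReal_pow (abs_nonneg _),
      ENNReal.ofReal_pow (norm_nonneg _), ofReal_norm, mul_comm, Pi.mul_apply]
  have habs : Continuous fun lam : ℝ => ENNReal.ofReal |lam| :=
    ENNReal.continuous_ofReal.comp continuous_abs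
  have hradius : ⨆ lam ∈ essSupport ν g, ENNReal.ofReal |lam| =
      essSup (fun lam => ENNReal.ofReal |lam|) μ := by
    rw [essSupport_eq_support_withDensity hw.aemeasurable (by simp),
      essSup_eq_iSup_mem_support habs.lowerSemicontinuous]
  have hlim := (tendsto_lintegral_pow_rpow_inv_essSup (μ := μ) habs.measurable.aemeasurable).comp
    (tendsto_id.const_mul_atTop' (by norm_num : 0 < 4))
  rw [hradius]
  refine hlim.congr fun n => ?_
  simp only [Function.comp_apply, id, hmoment, Nat.cast_mul, Nat.cast_ofNat, one_div]

/-- Support-radius lemma: if `|·|^(2n)·g ∈ L²(ν)` for all `n`, then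
`(∫ |λ|^(4n)|g(λ)|² dν)^(1/(4n)) → R_g` in `[0,∞]`, where `R_g` is the supremum of
`|λ|` over the `ν`-essential support of `g`. -/
theorem cherednik_support_radius
    (α β : ℝ) (hβ : -(1/2 : ℝ) ≤ β) (hβα : β ≤ α) (hα : -(1/2 : ℝ) < α)
    (ρ : ℝ) (hρ : ρ = α + β + 1)
    (g : ℝ → ℂ) (hg : Measurable g)
    (hL2 : ∀ n : ℕ, MemLp (fun lam : ℝ => (|lam| ^ (2 * n) : ℝ) • g lam) 2
      (plancherelMeasure α β)) :
    Tendsto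
      (fun n : ℕ =>
        (∫⁻ lam, ENNReal.ofReal (|lam| ^ (4 * n) * (‖g lam‖) ^ 2)
            ∂(plancherelMeasure α β)) ^ ((1 : ℝ) / (4 * n)))
      atTop
      (nhds (⨆ lam ∈ essSupport (plancherelMeasure α β) g, ENNReal.ofReal |lam|)) :=
  cherednik_support_radius_general α β g hg hL2
end
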